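/- (First bias term in E[σ̂²].) Let U₁,…,Uₙ be i.i.d. pairs Uᵢ = (Xᵢ,Yᵢ) with Xᵢ ~ P, Yᵢ ~ Q, and n ≥ 2. Then | (1/n³) Σ_{i,j,ℓ=1}^n E[H*ᵢℓ H*ⱼℓ] − E[H*₁₂ H*₁₃] | ≤ 18 ν² (3/n − 2/n²). -/

import Mathlib

/-!
Each summand `E[H*ᵢℓ H*ⱼℓ]` and the target `E[H*₁₂ H*₁₃]` are bounded by `9ν²`, since
`|H*| ≤ 3ν`. When `i, j, ℓ` are pairwise distinct, `(Uℓ, Uᵢ, Uⱼ)` has law `m ⊗ m ⊗ m`, and the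
symmetry of `H*` turns the summand into exactly `E[H*₁₂ H*₁₃]`. So only the
`n³ - n(n-1)(n-2) = 3n² - 2n` triples with a repeated index contribute, each by at most `18ν²`.
-/

open MeasureTheory ProbabilityTheory Filter Finset

noncomputable def Hstar {𝒳 : Type*} (k : 𝒳 → 𝒳 → ℝ) (u v : 𝒳 × 𝒳) : ℝ :=
  k u.1 v.1 - k u.1 v.2 - k u.2 v.1

section Hstar

variable {𝒳 : Type*} {k : 𝒳 → 𝒳 → ℝ}

lemma Hstar_comm (hsymm : ∀ x x', k x x' = k x' x) (u v : 𝒳 × 𝒳) :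
    Hstar k u v = Hstar k v u := by
  simp only [Hstar, hsymm u.1, hsymm u.2]
  ring

lemma abs_Hstar_le {ν : ℝ} (hbound : ∀ x x', |k x x'| ≤ ν) (u v : 𝒳 × 𝒳) :
    |Hstar k u v| ≤ 3 * ν := by
  have h1 := abs_le.1 (hbound u.1 v.1)
  have h2 := abs_le.1 (hbound u.1 v.2)
  have h3 := abs_le.1 (hbound u.2 v.1)
  rw [Hstar, abs_le]
  constructor <;> linarith

lemma abs_Hstar_mul_Hstar_le {ν : ℝ} (hbound : ∀ x x', |k x x'| ≤ ν) (u v u' v' : 𝒳 × 𝒳) :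
    |Hstar k u v * Hstar k u' v'| ≤ 9 * ν ^ 2 := by
  have h := abs_Hstar_le hbound u v
  have h' := abs_Hstar_le hbound u' v'
  rw [abs_mul]
  nlinarith [abs_nonneg (Hstar k u v), abs_nonneg (Hstar k u' v')]

lemma Measurable.Hstar [MeasurableSpace 𝒳] {α : Type*} [MeasurableSpace α] {f g : α → 𝒳 × 𝒳}
    (hf : Measurable f) (hg : Measurable g) (hk : Measurable (Function.uncurry k)) :
    Measurable fun a => Hstar k (f a) (g a) :=
  ((hk.comp (hf.fst.prodMk hg.fst)).sub (hk.comp (hf.fst.prodMk hg.snd))).sub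
    (hk.comp (hf.snd.prodMk hg.fst))

end Hstar

section TripleSums

variable {ι : Type*} [Fintype ι]

lemma abs_sum_sum_sum_le_of_eq_zero_of_pairwise_ne (D : ι → ι → ι → ℝ) {C : ℝ}
    (hC : ∀ i j l, |D i j l| ≤ C) (hD : ∀ i j l, i ≠ j → i ≠ l → j ≠ l → D i j l = 0) :
    |∑ i, ∑ j, ∑ l, D i j l| ≤ C * (3 * (Fintype.card ι : ℝ) ^ 2 - 2 * Fintype.card ι) := by
  classical
  set N : ℝ := (Fintype.card ι : ℝ)
  have inner : ∀ i j, |∑ l, D i j l| ≤ C * if i = j then N else 2 := by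
    intro i j
    split_ifs with hij
    · calc |∑ l, D i j l| ≤ ∑ l, |D i j l| := abs_sum_le_sum_abs _ _
        _ ≤ ∑ _l : ι, C := sum_le_sum fun l _ => hC i j l
        _ = C * N := by simp [N, mul_comm]
    · have hsupp : ∑ l, D i j l = D i j i + D i j j := by
        rw [← sum_pair hij]
        refine (sum_subset (subset_univ _) fun l _ hl => ?_).symm
        simp only [mem_insert, mem_singleton, not_or] at hl
        exact hD i j l hij (Ne.symm hl.1) (Ne.symm hl.2)
      rw [hsupp]
      linarith [abs_add_le (D i j i) (D i j j), hC i j i, hC i j j]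
  have outer : ∀ i, |∑ j, ∑ l, D i j l| ≤ C * (3 * N - 2) := by
    intro i
    have hrest : ∑ j ∈ univ.erase i, (if i = j then N else 2) = ∑ _j ∈ univ.erase i, (2 : ℝ) :=
      sum_congr rfl fun j hj => if_neg (Ne.symm (ne_of_mem_erase hj))
    calc |∑ j, ∑ l, D i j l| ≤ ∑ j, |∑ l, D i j l| := abs_sum_le_sum_abs _ _
      _ ≤ ∑ j, C * if i = j then N else 2 := sum_le_sum fun j _ => inner i j
      _ = C * (3 * N - 2) := by
        rw [← mul_sum, ← add_sum_erase _ _ (mem_univ i), if_pos rfl, hrest, sum_const,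
          card_erase_of_mem (mem_univ i), card_univ, nsmul_eq_mul,
          Nat.cast_sub (Fintype.card_pos_iff.2 ⟨i⟩)]
        ring
  calc |∑ i, ∑ j, ∑ l, D i j l| ≤ ∑ i, |∑ j, ∑ l, D i j l| := abs_sum_le_sum_abs _ _
    _ ≤ ∑ _i : ι, C * (3 * N - 2) := sum_le_sum fun i _ => outer i
    _ = C * (3 * N ^ 2 - 2 * N) := by simp [N]; ring

lemma abs_triple_mean_sub_le [Nonempty ι] (S : ι → ι → ι → ℝ) {T C : ℝ}
    (hC : ∀ i j l, |S i j l - T| ≤ C) (hS : ∀ i j l, i ≠ j → i ≠ l → j ≠ l → S i j l = T) :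
    |(1 / (Fintype.card ι : ℝ) ^ 3) * ∑ i, ∑ j, ∑ l, S i j l - T| ≤
      C * (3 / (Fintype.card ι : ℝ) - 2 / (Fintype.card ι : ℝ) ^ 2) := by
  set N : ℝ := (Fintype.card ι : ℝ)
  have hN : 0 < N := Nat.cast_pos.2 Fintype.card_pos
  have hsum := abs_sum_sum_sum_le_of_eq_zero_of_pairwise_ne (fun i j l => S i j l - T) hC
    fun i j l hij hil hjl => sub_eq_zero.2 (hS i j l hij hil hjl)
  have hcenter : ∑ i, ∑ j, ∑ l, (S i j l - T) = ∑ i, ∑ j, ∑ l, S i j l - N ^ 3 * T := by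
    simp [sum_sub_distrib, N]
    ring
  have hfactor : (1 / N ^ 3) * ∑ i, ∑ j, ∑ l, S i j l - T =
      (1 / N ^ 3) * (∑ i, ∑ j, ∑ l, S i j l - N ^ 3 * T) := by
    field_simp
  rw [hcenter] at hsum
  rw [hfactor, abs_mul, abs_of_pos (by positivity)]
  calc (1 / N ^ 3) * |∑ i, ∑ j, ∑ l, S i j l - N ^ 3 * T|
      ≤ (1 / N ^ 3) * (C * (3 * N ^ 2 - 2 * N)) := by gcongr
    _ = C * (3 / N - 2 / N ^ 2) := by field_simp

end TripleSums

lemma abs_integral_le_of_forall_abs_le {α : Type*} [MeasurableSpace α] {μ : Measure α}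
    [IsProbabilityMeasure μ] {f : α → ℝ} {C : ℝ} (h : ∀ a, |f a| ≤ C) : |∫ a, f a ∂μ| ≤ C := by
  simpa using norm_integral_le_of_norm_le_const (μ := μ) (f := f) (ae_of_all _ h)

lemma integral_integral_integral_eq_integral_prod {α β γ E : Type*} [MeasurableSpace α]
    [MeasurableSpace β] [MeasurableSpace γ] [NormedAddCommGroup E] [NormedSpace ℝ E]
    {μ : Measure α} {ν : Measure β} {ρ : Measure γ} [SFinite μ] [SFinite ν] [SFinite ρ]
    {f : α × β × γ → E} (hf : Integrable f (μ.prod (ν.prod ρ))) :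
    ∫ a, ∫ b, ∫ c, f (a, b, c) ∂ρ ∂ν ∂μ = ∫ z, f z ∂μ.prod (ν.prod ρ) := by
  rw [integral_prod _ hf]
  refine integral_congr_ae ?_
  filter_upwards [hf.prod_right_ae] with a ha
  exact (integral_prod _ ha).symm

lemma ProbabilityTheory.iIndepFun.map_prodMk_prodMk_eq_prod {Ω ι β : Type*} [MeasurableSpace Ω]
    [MeasurableSpace β] {μ : Measure Ω} [IsProbabilityMeasure μ] {U : ι → Ω → β}
    (hU : ∀ i, Measurable (U i)) (hindep : iIndepFun U μ) {m : Measure β}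
    (hlaw : ∀ i, μ.map (U i) = m) {i j l : ι} (hij : i ≠ j) (hil : i ≠ l) (hjl : j ≠ l) :
    μ.map (fun ω => (U l ω, U i ω, U j ω)) = m.prod (m.prod m) := by
  have hpair : μ.map (fun ω => (U i ω, U j ω)) = m.prod m := by
    rw [(hindep.indepFun hij).map_prod_eq_prod_map_map (hU i).aemeasurable (hU j).aemeasurable,
      hlaw, hlaw]
  rw [(hindep.indepFun_prodMk hU i j l hil hjl).symm.map_prod_eq_prod_map_map
    (hU l).aemeasurable ((hU i).prodMk (hU j)).aemeasurable, hpair, hlaw]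

theorem first_bias_term_general {𝒳 Ω₀ : Type*} [MeasurableSpace 𝒳] [MeasurableSpace Ω₀]
    (μ : Measure Ω₀) [IsProbabilityMeasure μ]
    (m : Measure (𝒳 × 𝒳)) [IsProbabilityMeasure m]
    (k : 𝒳 → 𝒳 → ℝ) (ν : ℝ)
    (hk : Measurable (Function.uncurry k))
    (hsymm : ∀ x x', k x x' = k x' x)
    (hbound : ∀ x x', |k x x'| ≤ ν)
    (n : ℕ) (hn : 2 ≤ n)
    (U : Fin n → Ω₀ → 𝒳 × 𝒳)
    (hU : ∀ i, Measurable (U i))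
    (hindep : iIndepFun U μ)
    (hlaw : ∀ i, Measure.map (U i) μ = m) :
    |(1 / (n : ℝ) ^ 3) *
        (∑ i : Fin n, ∑ j : Fin n, ∑ l : Fin n,
          ∫ ω, Hstar k (U i ω) (U l ω) * Hstar k (U j ω) (U l ω) ∂μ) -
        ∫ u, (∫ v, (∫ w, Hstar k u v * Hstar k u w ∂m) ∂m) ∂m| ≤
      18 * ν ^ 2 * (3 / (n : ℝ) - 2 / (n : ℝ) ^ 2) := by
  have : Nonempty (Fin n) := ⟨⟨0, by omega⟩⟩
  set G : (𝒳 × 𝒳) × (𝒳 × 𝒳) × (𝒳 × 𝒳) → ℝ := fun z => Hstar k z.1 z.2.1 * Hstar k z.1 z.2.2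
  have hG : Measurable G :=
    (measurable_fst.Hstar measurable_snd.fst hk).mul (measurable_fst.Hstar measurable_snd.snd hk)
  have hG_le : ∀ z, |G z| ≤ 9 * ν ^ 2 := fun z => abs_Hstar_mul_Hstar_le hbound _ _ _ _
  set T := ∫ u, (∫ v, (∫ w, Hstar k u v * Hstar k u w ∂m) ∂m) ∂m
  have hT : T = ∫ z, G z ∂m.prod (m.prod m) :=
    integral_integral_integral_eq_integral_prod (.of_bound hG.aestronglyMeasurable _
      (ae_of_all _ hG_le))
  have hS_eq : ∀ i j l, i ≠ j → i ≠ l → j ≠ l →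
      ∫ ω, Hstar k (U i ω) (U l ω) * Hstar k (U j ω) (U l ω) ∂μ = T := by
    intro i j l hij hil hjl
    have hmeas : Measurable fun ω => (U l ω, U i ω, U j ω) := (hU l).prodMk ((hU i).prodMk (hU j))
    rw [hT, ← hindep.map_prodMk_prodMk_eq_prod hU hlaw hij hil hjl,
      integral_map hmeas.aemeasurable hG.aestronglyMeasurable]
    simp only [G, Hstar_comm hsymm _ (U l _)]
  have hC : ∀ i j l, |∫ ω, Hstar k (U i ω) (U l ω) * Hstar k (U j ω) (U l ω) ∂μ - T| ≤
      18 * ν ^ 2 := fun i j l =>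
    (abs_sub _ _).trans <| by
      linarith [abs_integral_le_of_forall_abs_le (μ := μ) fun ω =>
        abs_Hstar_mul_Hstar_le hbound (U i ω) (U l ω) (U j ω) (U l ω),
        hT ▸ abs_integral_le_of_forall_abs_le hG_le]
  simpa only [Fintype.card_fin] using abs_triple_mean_sub_le _ hC hS_eq

/-- First bias term in `E[σ̂²]`:
`|(1/n³) ∑_{i,j,ℓ} E[H*ᵢℓ H*ⱼℓ] − E[H*₁₂ H*₁₃]| ≤ 18ν² (3/n − 2/n²)`,
where `E[H*₁₂ H*₁₃]` is the expectation over three i.i.d. pairs with common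
law `m`, written as an iterated integral. -/
theorem first_bias_term {𝒳 Ω₀ : Type*} [MeasurableSpace 𝒳] [MeasurableSpace Ω₀]
    (μ : Measure Ω₀) [IsProbabilityMeasure μ]
    (P Q : Measure 𝒳) [IsProbabilityMeasure P] [IsProbabilityMeasure Q]
    (m : Measure (𝒳 × 𝒳)) [IsProbabilityMeasure m]
    (k : 𝒳 → 𝒳 → ℝ) (ν : ℝ)
    (hk : Measurable (Function.uncurry k))
    (hsymm : ∀ x x', k x x' = k x' x)
    (hbound : ∀ x x', |k x x'| ≤ ν)
    (n : ℕ) (hn : 2 ≤ n)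
    (U : Fin n → Ω₀ → 𝒳 × 𝒳)
    (hU : ∀ i, Measurable (U i))
    (hindep : iIndepFun U μ)
    (hlaw : ∀ i, Measure.map (U i) μ = m)
    (hmP : m.map Prod.fst = P) (hmQ : m.map Prod.snd = Q) :
    |(1 / (n : ℝ) ^ 3) *
        (∑ i : Fin n, ∑ j : Fin n, ∑ l : Fin n,
          ∫ ω, Hstar k (U i ω) (U l ω) * Hstar k (U j ω) (U l ω) ∂μ) -
        ∫ u, (∫ v, (∫ w, Hstar k u v * Hstar k u w ∂m) ∂m) ∂m| ≤
      18 * ν ^ 2 * (3 / (n : ℝ) - 2 / (n : ℝ) ^ 2) :=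
  first_bias_term_general μ m k ν hk hsymm hbound n hn U hU hindep hlaw
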